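/- Let α : G ↷ A and β : G ↷ B be actions on C*-algebras, and ψ : A → M(B) a *-homomorphism such that the map I ↦ closure(Bψ(I)B) from I(A) to I(B) is equivariant with respect to α♯ and β♯. Define ψ̂ : A → C_b^s(G, M(B)) = M(C₀(G,B)) by ψ̂(a)(g) = β_g(ψ(α_{g⁻¹}(a))). Then ψ̂ is equivariant with respect to α and the action β̄ on C_b^s(G,M(B)) given by β̄_g(f)(h) = β_g(f(g⁻¹h)), and for every closed ideal I of A the closed ideal of C₀(G,B) generated by ψ̂(I) equals C₀(G, closure(Bψ(I)B)). -/

import Mathlib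

/-!
The equivariance of `ψ̂` is a direct computation. For the ideal, let `J = closure(Bψ(I)B)`.
Conjugating by `β_g` and using the equivariance of `I ↦ closure(Bψ(I)B)` at `g⁻¹` shows that
every fibre `closure(B ψ̂(I)(g) B) = β_g(closure(B ψ(α_{g⁻¹} I) B))` equals `J`, so the ideal
generated by `ψ̂(I)` lies in `C₀(G, J)`. Conversely, `g ↦ b ψ̂(a)(g) c` is a continuous section
all of whose cutoffs `φ b ψ̂(a) c = (√φ b) ψ̂(a) (√φ c)` lie in the generated ideal, and an element
of `C₀(G, J)` is approximated by finite sums of such cutoffs, through a partition of unity on a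
compact set outside of which it is small.
-/

open ZeroAtInfty MultiplierAlgebra

noncomputable instance {X B : Type*} [TopologicalSpace X] [NonUnitalCStarAlgebra B] :
    NonUnitalCStarAlgebra C₀(X, B) where

/-- The closed two-sided ideal generated by a set. -/
def genClosedIdeal {C : Type*} [NonUnitalCStarAlgebra C] (s : Set C) : TwoSidedIdeal C :=
  sInf {J : TwoSidedIdeal C | IsClosed (J : Set C) ∧ s ⊆ J}

variable {B : Type*} [NonUnitalCStarAlgebra B]

/-- For `ψ : A → M(B)` and a set `s ⊆ A`, the closed two-sided ideal
`closure(B ψ(s) B)` of `B`. -/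
def mulIdealGen {A : Type*} [NonUnitalCStarAlgebra A]
    (ψ : A →⋆ₙₐ[ℂ] 𝓜(ℂ, B)) (s : Set A) : TwoSidedIdeal B :=
  genClosedIdeal {x : B | ∃ a ∈ s, ∃ b c : B, x = b * (ψ a).fst c}

open scoped CStarAlgebra

lemma continuous_apply_of_isometry {X E F : Type*} [TopologicalSpace X] [PseudoMetricSpace E]
    [PseudoMetricSpace F] {T : X → E → F} (hT : ∀ x, Isometry (T x))
    (hTc : ∀ e, Continuous fun x => T x e) {f : X → E} (hf : Continuous f) :
    Continuous fun x => T x (f x) := by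
  refine continuous_iff_continuousAt.mpr fun x₀ => tendsto_iff_dist_tendsto_zero.mpr ?_
  refine squeeze_zero (fun _ => dist_nonneg)
    (fun x => (dist_triangle _ (T x (f x₀)) _).trans_eq (by rw [(hT x).dist_eq])) ?_
  simpa using ((hf.tendsto x₀).dist (tendsto_const_nhds (x := f x₀))).add
    (((hTc (f x₀)).tendsto x₀).dist (tendsto_const_nhds (x := T x₀ (f x₀))))

theorem exists_continuous_sum_le_one_of_isCompact {X ι : Type*} [TopologicalSpace X]
    [RegularSpace X] [LocallyCompactSpace X] {K : Set X} (hK : IsCompact K) (t : Finset ι)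
    {U : ι → Set X} (hU : ∀ i, IsOpen (U i)) (hKU : K ⊆ ⋃ i ∈ t, U i) :
    ∃ φ : ι → C(X, ℝ), (∀ i, HasCompactSupport (φ i)) ∧ (∀ i x, 0 ≤ φ i x) ∧
      (∀ i, ∀ x ∉ U i, φ i x = 0) ∧ (∀ x, ∑ i ∈ t, φ i x ≤ 1) ∧
      ∀ x ∈ K, ∑ i ∈ t, φ i x = 1 := by
  obtain ⟨L, hLc, hLU, hKL⟩ := hK.finite_compact_cover t U (fun i _ => hU i) hKU
  choose F hF1 hF0 hFc hF01 using fun i => exists_continuous_one_zero_of_isCompact (hLc i)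
    (hU i).isClosed_compl (Set.disjoint_compl_right_iff_subset.mpr (hLU i))
  -- normalise by `max 1 (∑ F i)`, which is `∑ F i` on `K` since some `F i` is `1` there
  let N : C(X, ℝ) := ⟨fun x => (max 1 (∑ i ∈ t, F i x))⁻¹,
    (continuous_const.max (continuous_finsetSum t fun i _ => (F i).continuous)).inv₀
      fun x => (one_pos.trans_le (le_max_left _ _)).ne'⟩
  have hsum : ∀ x, ∑ i ∈ t, (F i * N) x = (∑ i ∈ t, F i x) / max 1 (∑ i ∈ t, F i x) := fun x => by
    simp [N, Finset.sum_mul, div_eq_mul_inv]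
  refine ⟨fun i => F i * N, fun i => (hFc i).mul_right, fun i x => ?_, fun i x hx => ?_,
    fun x => ?_, fun x hx => ?_⟩
  · exact mul_nonneg (hF01 i x).1 (inv_nonneg.mpr (zero_le_one.trans (le_max_left _ _)))
  · simp [hF0 i hx]
  · rw [hsum]
    exact div_le_one_of_le₀ (le_max_right _ _) (zero_le_one.trans (le_max_left _ _))
  · rw [hKL] at hx
    obtain ⟨i, hi, hxi⟩ := Set.mem_iUnion₂.mp hx
    have h1 : 1 ≤ ∑ j ∈ t, F j x := (hF1 i hxi).symm.le.trans
      (Finset.single_le_sum (fun j _ => (hF01 j x).1) hi)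
    rw [hsum, max_eq_right h1, div_self (one_pos.trans_le h1).ne']

lemma norm_sub_sum_smul_le {ι E : Type*} [SeminormedAddCommGroup E] [NormedSpace ℝ E]
    (t : Finset ι) (w : E) (q : ι → E) {φ : ι → ℝ} (hφ : ∀ i, 0 ≤ φ i) {δ : ℝ}
    (hq : ∀ i ∈ t, φ i ≠ 0 → ‖w - q i‖ ≤ δ) :
    ‖w - ∑ i ∈ t, φ i • q i‖ ≤ |1 - ∑ i ∈ t, φ i| * ‖w‖ + (∑ i ∈ t, φ i) * δ := by
  have hdecomp : w - ∑ i ∈ t, φ i • q i =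
      (1 - ∑ i ∈ t, φ i) • w + ∑ i ∈ t, φ i • (w - q i) := by
    simp only [smul_sub, Finset.sum_sub_distrib, sub_smul, one_smul, Finset.sum_smul]
    abel
  rw [hdecomp, Finset.sum_mul]
  refine (norm_add_le _ _).trans (add_le_add (norm_smul _ _).le
    ((norm_sum_le _ _).trans (Finset.sum_le_sum fun i hi => ?_)))
  rw [norm_smul, Real.norm_of_nonneg (hφ i)]
  rcases (hφ i).eq_or_lt with h | h
  · rw [← h, zero_mul, zero_mul]
  · exact mul_le_mul_of_nonneg_left (hq i hi h.ne') (hφ i)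

namespace TwoSidedIdeal

variable {R R' : Type*} [NonUnitalNonAssocRing R] [TopologicalSpace R]
  [NonUnitalNonAssocRing R'] [TopologicalSpace R']

def topologicalClosure [IsTopologicalRing R] (I : TwoSidedIdeal R) : TwoSidedIdeal R :=
  .mk' (closure I) (subset_closure I.zero_mem)
    (fun hx hy => map_mem_closure₂ continuous_add hx hy fun _ ha _ hb => I.add_mem ha hb)
    (fun hx => map_mem_closure continuous_neg hx fun _ ha => I.neg_mem ha)
    (fun {x _} hy => map_mem_closure (continuous_const_mul x) hy fun _ ha => I.mul_mem_left _ _ ha)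
    (fun {_ y} hx => map_mem_closure (f := (· * y)) (continuous_mul_const y) hx fun _ ha =>
      I.mul_mem_right _ _ ha)

lemma coe_topologicalClosure [IsTopologicalRing R] (I : TwoSidedIdeal R) :
    (I.topologicalClosure : Set R) = closure I := by
  rw [topologicalClosure, coe_mk']

lemma isClosed_comap {F : Type*} [FunLike F R R'] [NonUnitalRingHomClass F R R'] {f : F}
    (hf : Continuous f) {J : TwoSidedIdeal R'} (hJ : IsClosed (J : Set R')) :
    IsClosed (comap f J : Set R) := by
  convert hJ.preimage hf using 1
  ext
  exact mem_comap (f := f)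

end TwoSidedIdeal

section GenClosedIdeal

variable {C D : Type*} [NonUnitalCStarAlgebra C] [NonUnitalCStarAlgebra D]

lemma subset_genClosedIdeal (s : Set C) : s ⊆ genClosedIdeal s := fun _ hx =>
  (TwoSidedIdeal.mem_sInf C).mpr fun _ hJ => hJ.2 hx

lemma genClosedIdeal_le {s : Set C} {J : TwoSidedIdeal C} (hJ : IsClosed (J : Set C))
    (hs : s ⊆ J) : genClosedIdeal s ≤ J :=
  sInf_le ⟨hJ, hs⟩

lemma isClosed_genClosedIdeal (s : Set C) : IsClosed (genClosedIdeal s : Set C) := by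
  have : (genClosedIdeal s : Set C) =
      ⋂ J ∈ {J : TwoSidedIdeal C | IsClosed (J : Set C) ∧ s ⊆ J}, (J : Set C) := by
    ext
    simp [genClosedIdeal, TwoSidedIdeal.mem_sInf]
  rw [this]
  exact isClosed_biInter fun J hJ => hJ.1

lemma genClosedIdeal_eq_self {J : TwoSidedIdeal C} (hJ : IsClosed (J : Set C)) :
    genClosedIdeal (J : Set C) = J :=
  le_antisymm (genClosedIdeal_le hJ subset_rfl) (subset_genClosedIdeal _)

lemma coe_genClosedIdeal_subset_closure {s : Set C} (hl : ∀ r {x}, x ∈ s → r * x ∈ s)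
    (hr : ∀ r {x}, x ∈ s → x * r ∈ s) {A : AddSubgroup C} (hs : s ⊆ A) :
    (genClosedIdeal s : Set C) ⊆ closure A := by
  have hspan : (TwoSidedIdeal.span s : Set C) ⊆ A := fun x hx =>
    (AddSubgroup.closure_le A).mpr hs
      ((TwoSidedIdeal.mem_span_iff_mem_addSubgroup_closure_absorbing (fun r _ => hl r)
        (fun _ r => hr r)).mp hx)
  have hle : genClosedIdeal s ≤ (TwoSidedIdeal.span s).topologicalClosure := by
    refine genClosedIdeal_le ?_ ?_ <;> rw [TwoSidedIdeal.coe_topologicalClosure]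
    · exact isClosed_closure
    · exact TwoSidedIdeal.subset_span.trans subset_closure
  exact (TwoSidedIdeal.le_iff.mp hle).trans
    ((TwoSidedIdeal.coe_topologicalClosure _).trans_subset (closure_mono hspan))

lemma coe_genClosedIdeal_image (e : C ≃⋆ₐ[ℂ] D) (s : Set C) :
    (genClosedIdeal (e '' s) : Set D) = e '' genClosedIdeal s := by
  have hle : genClosedIdeal (e '' s) ≤ TwoSidedIdeal.comap e.symm (genClosedIdeal s) := by
    refine genClosedIdeal_le (TwoSidedIdeal.isClosed_comap (map_continuous _)
      (isClosed_genClosedIdeal s)) ?_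
    rintro _ ⟨x, hx, rfl⟩
    exact (TwoSidedIdeal.mem_comap _).mpr (by simpa using subset_genClosedIdeal s hx)
  have hge : genClosedIdeal s ≤ TwoSidedIdeal.comap e (genClosedIdeal (e '' s)) :=
    genClosedIdeal_le (TwoSidedIdeal.isClosed_comap (map_continuous _)
      (isClosed_genClosedIdeal _)) fun x hx =>
        (TwoSidedIdeal.mem_comap _).mpr (subset_genClosedIdeal _ ⟨x, hx, rfl⟩)
  ext y
  refine ⟨fun hy => ⟨e.symm y, (TwoSidedIdeal.mem_comap _).mp (hle hy), e.apply_symm_apply y⟩, ?_⟩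
  rintro ⟨x, hx, rfl⟩
  exact (TwoSidedIdeal.mem_comap _).mp (hge hx)

end GenClosedIdeal

lemma CStarRing.eq_zero_of_forall_mul_eq_zero {C : Type*} [NonUnitalCStarAlgebra C] {w : C}
    (h : ∀ z : C, z * w = 0) : w = 0 :=
  (CStarRing.star_mul_self_eq_zero_iff w).mp (h _)

namespace DoubleCentralizer

variable {C D : Type*} [NonUnitalCStarAlgebra C] [NonUnitalCStarAlgebra D]

lemma fst_apply_mul (m : 𝓜(ℂ, C)) (x y : C) : m.fst (x * y) = m.fst x * y :=
  sub_eq_zero.mp <| CStarRing.eq_zero_of_forall_mul_eq_zero fun z => by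
    rw [mul_sub, ← m.central, ← mul_assoc z, ← m.central, mul_assoc, sub_self]

lemma coe_injective : Function.Injective ((↑) : C → 𝓜(ℂ, C)) := fun a b h =>
  sub_eq_zero.mp <| CStarRing.eq_zero_of_forall_mul_eq_zero fun z => by
    have : z * a = z * b := congrArg (fun m : 𝓜(ℂ, C) => m.snd z) h
    rw [mul_sub, this, sub_self]

lemma mul_coe (m : 𝓜(ℂ, C)) (c : C) : m * (c : 𝓜(ℂ, C)) = (m.fst c : 𝓜(ℂ, C)) := by
  refine DoubleCentralizer.ext _ _ _ _ (Prod.ext (ContinuousLinearMap.ext fun x => ?_)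
    (ContinuousLinearMap.ext fun x => ?_))
  · simp [fst_apply_mul]
  · simp [m.central]

lemma coe_mul_mul_coe (b c : C) (m : 𝓜(ℂ, C)) :
    (b : 𝓜(ℂ, C)) * m * c = ((b * m.fst c : C) : 𝓜(ℂ, C)) := by
  rw [mul_assoc, mul_coe]
  simpa using (map_mul (coeHom (𝕜 := ℂ) (A := C)) b (m.fst c)).symm

lemma map_mul_fst_apply {F F' : Type*} [FunLike F C D] [MulHomClass F C D]
    [FunLike F' 𝓜(ℂ, C) 𝓜(ℂ, D)] [MulHomClass F' 𝓜(ℂ, C) 𝓜(ℂ, D)] (φ : F) (Φ : F')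
    (hΦ : ∀ x : C, Φ x = φ x) (m : 𝓜(ℂ, C)) (b c : C) :
    φ b * (Φ m).fst (φ c) = φ (b * m.fst c) :=
  coe_injective <| by rw [← coe_mul_mul_coe, ← hΦ, ← hΦ, ← map_mul, ← map_mul, coe_mul_mul_coe, hΦ]

lemma continuous_fst : Continuous fun m : 𝓜(ℂ, C) => m.fst := by
  have := _root_.continuous_fst.comp
    (isUniformEmbedding_toProdMulOpposite (𝕜 := ℂ) (A := C)).uniformContinuous.continuous
  exact this

/-- The products `b m c`, `m ∈ M`, which generate the ideal `closure (C M C)`. -/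
def sandwich (M : Set 𝓜(ℂ, C)) : Set C := {x | ∃ m ∈ M, ∃ b c : C, x = b * m.fst c}

lemma mul_mem_sandwich_left {M : Set 𝓜(ℂ, C)} (r : C) {x : C} (hx : x ∈ sandwich M) :
    r * x ∈ sandwich M := by
  obtain ⟨m, hm, b, c, rfl⟩ := hx
  exact ⟨m, hm, r * b, c, (mul_assoc r b _).symm⟩

lemma mul_mem_sandwich_right {M : Set 𝓜(ℂ, C)} (r : C) {x : C} (hx : x ∈ sandwich M) :
    x * r ∈ sandwich M := by
  obtain ⟨m, hm, b, c, rfl⟩ := hx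
  exact ⟨m, hm, b, c * r, by rw [fst_apply_mul, mul_assoc]⟩

lemma sandwich_image {F : Type*} [FunLike F 𝓜(ℂ, C) 𝓜(ℂ, D)] [MulHomClass F 𝓜(ℂ, C) 𝓜(ℂ, D)]
    (φ : C ≃⋆ₐ[ℂ] D) (Φ : F) (hΦ : ∀ x : C, Φ x = φ x) (M : Set 𝓜(ℂ, C)) :
    sandwich (Φ '' M) = φ '' sandwich M := by
  ext x
  constructor
  · rintro ⟨_, ⟨m, hm, rfl⟩, b, c, rfl⟩
    refine ⟨φ.symm b * m.fst (φ.symm c), ⟨m, hm, _, _, rfl⟩, ?_⟩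
    rw [← map_mul_fst_apply φ Φ hΦ, φ.apply_symm_apply, φ.apply_symm_apply]
  · rintro ⟨_, ⟨m, hm, b, c, rfl⟩, rfl⟩
    exact ⟨Φ m, ⟨m, hm, rfl⟩, φ b, φ c, (map_mul_fst_apply φ Φ hΦ m b c).symm⟩

end DoubleCentralizer

open DoubleCentralizer

lemma mulIdealGen_eq_genClosedIdeal_sandwich {A : Type*} [NonUnitalCStarAlgebra A]
    (ψ : A →⋆ₙₐ[ℂ] 𝓜(ℂ, B)) (s : Set A) :
    mulIdealGen ψ s = genClosedIdeal (sandwich (ψ '' s)) := by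
  simp [mulIdealGen, sandwich]

lemma continuous_mul_fst_apply_map {X C : Type*} [TopologicalSpace X] [NonUnitalCStarAlgebra C]
    (β : X → C ≃⋆ₐ[ℂ] C) (βM : X → 𝓜(ℂ, C) ≃⋆ₐ[ℂ] 𝓜(ℂ, C)) (hβM : ∀ x (c : C), βM x c = β x c)
    (hβ : ∀ c, Continuous fun x => β x c) (hβsymm : ∀ c, Continuous fun x => (β x).symm c)
    {M : X → 𝓜(ℂ, C)} (hM : Continuous M) (b c : C) :
    Continuous fun x => b * (βM x (M x)).fst c := by
  have : (fun x => b * (βM x (M x)).fst c) =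
      fun x => β x ((β x).symm b * (M x).fst ((β x).symm c)) := funext fun x => by
    rw [← map_mul_fst_apply (β x) (βM x) (hβM x), StarAlgEquiv.apply_symm_apply,
      StarAlgEquiv.apply_symm_apply]
  rw [this]
  exact continuous_apply_of_isometry (fun x => StarAlgEquiv.isometry (β x)) hβ
    ((hβsymm b).mul ((DoubleCentralizer.continuous_fst.comp hM).clm_apply (hβsymm c)))

namespace ZeroAtInftyContinuousMap

variable {X E : Type*} [TopologicalSpace X] [NormedAddCommGroup E]

def ofHasCompactSupport (f : C(X, E)) (hf : HasCompactSupport f) : C₀(X, E) :=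
  ⟨f, hf.is_zero_at_infty⟩

lemma continuous_eval_const (x : X) : Continuous fun w : C₀(X, E) => w x :=
  (BoundedContinuousFunction.lipschitz_eval_const x).continuous.comp isometry_toBCF.continuous

lemma sum_apply {ι : Type*} (t : Finset ι) (d : ι → C₀(X, E)) (x : X) :
    (∑ i ∈ t, d i) x = ∑ i ∈ t, d i x := by
  induction t using Finset.cons_induction <;> simp [*]

protected lemma norm_le {w : C₀(X, E)} {c : ℝ} (hc : 0 ≤ c) : ‖w‖ ≤ c ↔ ∀ x, ‖w x‖ ≤ c := by
  rw [← norm_toBCF_eq_norm]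
  exact BoundedContinuousFunction.norm_le hc

lemma exists_isCompact_norm_lt (w : C₀(X, E)) {ε : ℝ} (hε : 0 < ε) :
    ∃ K : Set X, IsCompact K ∧ ∀ x ∉ K, ‖w x‖ < ε := by
  obtain ⟨K, hK, hKw⟩ := Filter.mem_cocompact.mp (zero_at_infty w (Metric.ball_mem_nhds 0 hε))
  exact ⟨K, hK, fun x hx => mem_ball_zero_iff.mp (hKw hx)⟩

end ZeroAtInftyContinuousMap

namespace TwoSidedIdeal

variable {C : Type*} [NonUnitalCStarAlgebra C]

/-- `C₀(X, J)`, as an ideal of `C₀(X, C)`. -/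
def zeroAtInfty (X : Type*) [TopologicalSpace X] (J : TwoSidedIdeal C) :
    TwoSidedIdeal C₀(X, C) :=
  .mk' {w | ∀ x, w x ∈ J} (fun _ => J.zero_mem) (fun hv hw x => J.add_mem (hv x) (hw x))
    (fun hw x => J.neg_mem (hw x)) (fun hw x => J.mul_mem_left _ _ (hw x))
    (fun hw x => J.mul_mem_right _ _ (hw x))

lemma mem_zeroAtInfty {X : Type*} [TopologicalSpace X] {J : TwoSidedIdeal C} {w : C₀(X, C)} :
    w ∈ J.zeroAtInfty X ↔ ∀ x, w x ∈ J :=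
  mem_mk' ..

lemma isClosed_zeroAtInfty (X : Type*) [TopologicalSpace X] {J : TwoSidedIdeal C}
    (hJ : IsClosed (J : Set C)) : IsClosed (J.zeroAtInfty X : Set C₀(X, C)) := by
  have : (J.zeroAtInfty X : Set C₀(X, C)) = ⋂ x, (fun w : C₀(X, C) => w x) ⁻¹' J := by
    ext
    simp only [SetLike.mem_coe, mem_zeroAtInfty, Set.mem_iInter, Set.mem_preimage]
  rw [this]
  exact isClosed_iInter fun x => hJ.preimage (ZeroAtInftyContinuousMap.continuous_eval_const x)

end TwoSidedIdeal

section CutoffSections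

variable {X E : Type*} [TopologicalSpace X] [NormedAddCommGroup E] [NormedSpace ℝ E]
  {S : Type*} [SetLike S C₀(X, E)] [AddSubgroupClass S C₀(X, E)]

def cutoffSections (D : S) : AddSubgroup (X → E) where
  carrier := {q | Continuous q ∧ ∀ φ : C(X, ℝ), HasCompactSupport φ → (∀ x, 0 ≤ φ x) →
    ∃ d ∈ D, ⇑d = ⇑φ • q}
  zero_mem' := ⟨continuous_const, fun _ _ _ => ⟨0, zero_mem D, by simp⟩⟩
  add_mem' := fun ⟨hq, hqD⟩ ⟨hr, hrD⟩ => ⟨hq.add hr, fun φ hφ hφ0 => by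
    obtain ⟨d, hd, hdq⟩ := hqD φ hφ hφ0
    obtain ⟨e, he, her⟩ := hrD φ hφ hφ0
    exact ⟨d + e, add_mem hd he, by rw [ZeroAtInftyContinuousMap.coe_add, hdq, her, smul_add]⟩⟩
  neg_mem' := fun ⟨hq, hqD⟩ => ⟨hq.neg, fun φ hφ hφ0 => by
    obtain ⟨d, hd, hdq⟩ := hqD φ hφ hφ0
    exact ⟨-d, neg_mem hd, by rw [ZeroAtInftyContinuousMap.coe_neg, hdq, smul_neg]⟩⟩

theorem mem_of_forall_apply_mem_closure_cutoffSections [RegularSpace X] [LocallyCompactSpace X]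
    {D : S} (hD : IsClosed (D : Set C₀(X, E))) {w : C₀(X, E)}
    (hw : ∀ x, w x ∈ closure ((cutoffSections D).map (Pi.evalAddMonoidHom (fun _ => E) x) :
      Set E)) : w ∈ D := by
  rw [← SetLike.mem_coe, ← hD.closure_eq, Metric.mem_closure_iff]
  intro ε hε
  obtain ⟨K, hK, hwK⟩ := w.exists_isCompact_norm_lt (by positivity : 0 < ε / 4)
  have hq : ∀ y, ∃ q ∈ cutoffSections D, ‖w y - q y‖ < ε / 2 := fun y => by
    obtain ⟨_, ⟨q, hq, rfl⟩, hdist⟩ := Metric.mem_closure_iff.mp (hw y) (ε / 2) (by positivity)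
    exact ⟨q, hq, by rwa [← dist_eq_norm]⟩
  choose q hqD hqy using hq
  let V : X → Set X := fun y => {x | ‖w x - q y x‖ < ε / 2}
  have hV : ∀ y, IsOpen (V y) := fun y =>
    isOpen_lt (w.continuous.sub (hqD y).1).norm continuous_const
  obtain ⟨t, hKt⟩ := hK.elim_finite_subcover V hV fun y _ => Set.mem_iUnion.mpr ⟨y, hqy y⟩
  obtain ⟨φ, hφc, hφ0, hφV, hφ1, hφK⟩ := exists_continuous_sum_le_one_of_isCompact hK t hV hKt
  choose d hdD hd using fun y => (hqD y).2 (φ y) (hφc y) (hφ0 y)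
  refine ⟨∑ y ∈ t, d y, sum_mem fun y _ => hdD y, ?_⟩
  rw [dist_eq_norm]
  refine lt_of_le_of_lt ((ZeroAtInftyContinuousMap.norm_le (by positivity)).mpr fun x => ?_)
    (by linarith : 3 * ε / 4 < ε)
  rw [ZeroAtInftyContinuousMap.sub_apply, ZeroAtInftyContinuousMap.sum_apply]
  simp only [hd]
  refine (norm_sub_sum_smul_le t _ _ (fun y => hφ0 y x) (δ := ε / 2) fun y _ hy =>
    (not_not.mp (mt (hφV y x) hy) : x ∈ V y).le).trans ?_
  have h1 := hφ1 x
  have h0 : 0 ≤ ∑ y ∈ t, φ y x := Finset.sum_nonneg fun y _ => hφ0 y x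
  by_cases hx : x ∈ K
  · rw [hφK x hx]
    linarith
  · have habs : |1 - ∑ y ∈ t, φ y x| ≤ 1 := abs_le.mpr ⟨by linarith, by linarith⟩
    nlinarith [hwK x hx, norm_nonneg (w x)]

end CutoffSections

lemma exists_eq_mul_fst_apply_eq_smul {X C : Type*} [TopologicalSpace X]
    [NonUnitalCStarAlgebra C] {M : X → 𝓜(ℂ, C)} {b c : C}
    (hq : Continuous fun x => b * (M x).fst c) {φ : C(X, ℝ)} (hφ : HasCompactSupport φ)
    (hφ0 : ∀ x, 0 ≤ φ x) :
    ∃ d u v : C₀(X, C), ⇑d = (fun x => u x * (M x).fst (v x)) ∧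
      ⇑d = ⇑φ • fun x => b * (M x).fst c := by
  let r : C(X, ℝ) := ⟨fun x => √(φ x), by fun_prop⟩
  have hr : HasCompactSupport r := hφ.comp_left Real.sqrt_zero
  refine ⟨.ofHasCompactSupport (φ • ⟨_, hq⟩) hφ.smul_right,
    .ofHasCompactSupport (r • ContinuousMap.const X b) hr.smul_right,
    .ofHasCompactSupport (r • ContinuousMap.const X c) hr.smul_right, funext fun x => ?_, rfl⟩
  show φ x • (b * (M x).fst c) = (√(φ x) • b) * (M x).fst (√(φ x) • c)
  rw [ContinuousLinearMap.map_smul_of_tower, smul_mul_smul_comm, Real.mul_self_sqrt (hφ0 x)]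

theorem coe_genClosedIdeal_sandwich_eq_of_fiber {X C ι : Type*} [TopologicalSpace X]
    [RegularSpace X] [LocallyCompactSpace X] [NonUnitalCStarAlgebra C] (s : Set ι)
    (m : ι → X → 𝓜(ℂ, C)) (hm : ∀ i b c, Continuous fun x => b * (m i x).fst c)
    {J : TwoSidedIdeal C} (hJ : IsClosed (J : Set C))
    (hfiber : ∀ x, (genClosedIdeal (sandwich ((m · x) '' s)) : Set C) = J) :
    (genClosedIdeal {w : C₀(X, C) | ∃ i ∈ s, ∃ u v : C₀(X, C),
        ⇑w = fun x => u x * (m i x).fst (v x)} : Set C₀(X, C)) = {w | ∀ x, w x ∈ J} := by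
  apply Set.Subset.antisymm
  · intro w hw
    refine TwoSidedIdeal.mem_zeroAtInfty.mp (genClosedIdeal_le (J := J.zeroAtInfty X)
      (TwoSidedIdeal.isClosed_zeroAtInfty X hJ) ?_ hw)
    rintro w ⟨i, hi, u, v, hw⟩
    refine TwoSidedIdeal.mem_zeroAtInfty.mpr fun x => ?_
    rw [← SetLike.mem_coe, ← hfiber x, hw]
    exact subset_genClosedIdeal _ ⟨_, ⟨i, hi, rfl⟩, u x, v x, rfl⟩
  · intro w hw
    refine mem_of_forall_apply_mem_closure_cutoffSections (isClosed_genClosedIdeal _) fun x => ?_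
    refine coe_genClosedIdeal_subset_closure mul_mem_sandwich_left mul_mem_sandwich_right ?_
      (by rw [hfiber x]; exact hw x)
    rintro _ ⟨_, ⟨i, hi, rfl⟩, b, c, rfl⟩
    refine ⟨_, ⟨hm i b c, fun φ hφ hφ0 => ?_⟩, rfl⟩
    obtain ⟨d, u, v, hduv, hd⟩ := exists_eq_mul_fst_apply_eq_smul (hm i b c) hφ hφ0
    exact ⟨d, subset_genClosedIdeal _ ⟨i, hi, u, v, hduv⟩, hd⟩

theorem psihat_equivariant_and_ideal_general
    {G : Type*} [Group G] [TopologicalSpace G] [IsTopologicalGroup G]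
    [LocallyCompactSpace G]
    {A : Type*} [NonUnitalCStarAlgebra A]
    (α : G → A ≃⋆ₐ[ℂ] A) (β : G → B ≃⋆ₐ[ℂ] B)
    (hαmul : ∀ g h a, α (g * h) a = α g (α h a))
    (hβ1 : β 1 = StarAlgEquiv.refl ℂ B) (hβmul : ∀ g h b, β (g * h) b = β g (β h b))
    (hαcont : ∀ a : A, Continuous fun g => α g a)
    (hβcont : ∀ b : B, Continuous fun g => β g b)
    -- the canonical (strictly continuous) extension of `β` to the multiplier algebra
    (βM : G → 𝓜(ℂ, B) ≃⋆ₐ[ℂ] 𝓜(ℂ, B))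
    (hβMmul : ∀ g h m, βM (g * h) m = βM g (βM h m))
    (hβMβ : ∀ (g : G) (b : B), βM g (b : 𝓜(ℂ, B)) = ((β g b : B) : 𝓜(ℂ, B)))
    (ψ : A →⋆ₙₐ[ℂ] 𝓜(ℂ, B))
    -- the map `I ↦ closure(Bψ(I)B)` is `α♯`-to-`β♯` equivariant
    (hequiv : ∀ (g : G) (I : TwoSidedIdeal A), IsClosed (I : Set A) →
      mulIdealGen ψ ((α g) '' (I : Set A)) =
        genClosedIdeal ((β g) '' (mulIdealGen ψ (I : Set A) : Set B)))
    -- `ψ̂(a)(g) = β_g(ψ(α_{g⁻¹}(a)))`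
    (ψhat : A → G → 𝓜(ℂ, B))
    (hψhat : ∀ a g, ψhat a g = βM g (ψ (α g⁻¹ a))) :
    -- (1) `ψ̂` is `α`-to-`β̄`-equivariant: `β̄_g(ψ̂(a)) = ψ̂(α_g(a))`
    (∀ (a : A) (g h : G), ψhat (α g a) h = βM g (ψhat a (g⁻¹ * h))) ∧
    -- (2) the closed ideal of `C₀(G,B)` generated by `ψ̂(I)` equals `C₀(G, closure(Bψ(I)B))`
    (∀ I : TwoSidedIdeal A, IsClosed (I : Set A) →
      ((genClosedIdeal {w : C₀(G, B) | ∃ a ∈ I, ∃ u v : C₀(G, B),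
          ⇑w = fun g => u g * ((ψhat a g).fst (v g))} : TwoSidedIdeal C₀(G, B)) :
        Set C₀(G, B)) =
      {w : C₀(G, B) | ∀ g : G, w g ∈ mulIdealGen ψ (I : Set A)}) := by
  have hβinv : ∀ g b, β g (β g⁻¹ b) = b := fun g b => by
    rw [← hβmul, mul_inv_cancel, hβ1]
    rfl
  refine ⟨fun a g h => ?_, fun I hI => ?_⟩
  · rw [hψhat, hψhat, ← hβMmul, mul_inv_cancel_left, mul_inv_rev, inv_inv, hαmul]
  set J := mulIdealGen ψ I
  have hJ : IsClosed (J : Set B) := isClosed_genClosedIdeal _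
  have hfiber : ∀ g, (genClosedIdeal (sandwich ((ψhat · g) '' I)) : Set B) = J := fun g => by
    have himage : (ψhat · g) '' I = βM g '' (ψ '' (α g⁻¹ '' I)) := by
      simp only [Set.image_image, hψhat]
    rw [himage, sandwich_image (β g) (βM g) (hβMβ g), coe_genClosedIdeal_image,
      ← mulIdealGen_eq_genClosedIdeal_sandwich, hequiv g⁻¹ I hI, coe_genClosedIdeal_image,
      genClosedIdeal_eq_self hJ, Set.image_image]
    simp [hβinv]
  have hgen_cont : ∀ a b c, Continuous fun g => b * (ψhat a g).fst c := fun a b c => by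
    simp_rw [hψhat]
    refine continuous_mul_fst_apply_map β βM hβMβ hβcont (fun b => ?_)
      ((map_continuous ψ).comp ((hαcont a).comp continuous_inv)) b c
    simp_rw [(β _).symm_apply_eq.mpr (hβinv _ b).symm]
    exact (hβcont b).comp continuous_inv
  simpa only [SetLike.mem_coe] using
    coe_genClosedIdeal_sandwich_eq_of_fiber (I : Set A) ψhat hgen_cont hJ hfiber

/-- For a `*`-homomorphism `ψ : A → M(B)` inducing an equivariant map on ideal lattices, the
map `ψ̂ : A → C_b^s(G, M(B)) = M(C₀(G,B))`, `ψ̂(a)(g) = β_g(ψ(α_{g⁻¹}(a)))`, is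
`α`-to-`β̄`-equivariant, and the closed ideal of `C₀(G,B)` generated by `ψ̂(I)` is
`C₀(G, closure(Bψ(I)B))`. -/
theorem psihat_equivariant_and_ideal
    {G : Type*} [Group G] [TopologicalSpace G] [IsTopologicalGroup G]
    [LocallyCompactSpace G] [SecondCountableTopology G]
    {A : Type*} [NonUnitalCStarAlgebra A]
    [TopologicalSpace.SeparableSpace A] [TopologicalSpace.SeparableSpace B]
    (α : G → A ≃⋆ₐ[ℂ] A) (β : G → B ≃⋆ₐ[ℂ] B)
    (hα1 : α 1 = StarAlgEquiv.refl ℂ A) (hαmul : ∀ g h a, α (g * h) a = α g (α h a))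
    (hβ1 : β 1 = StarAlgEquiv.refl ℂ B) (hβmul : ∀ g h b, β (g * h) b = β g (β h b))
    (hαcont : ∀ a : A, Continuous fun g => α g a)
    (hβcont : ∀ b : B, Continuous fun g => β g b)
    -- the canonical (strictly continuous) extension of `β` to the multiplier algebra
    (βM : G → 𝓜(ℂ, B) ≃⋆ₐ[ℂ] 𝓜(ℂ, B))
    (hβM1 : βM 1 = StarAlgEquiv.refl ℂ 𝓜(ℂ, B))
    (hβMmul : ∀ g h m, βM (g * h) m = βM g (βM h m))
    (hβMβ : ∀ (g : G) (b : B), βM g (b : 𝓜(ℂ, B)) = ((β g b : B) : 𝓜(ℂ, B)))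
    (ψ : A →⋆ₙₐ[ℂ] 𝓜(ℂ, B))
    -- the map `I ↦ closure(Bψ(I)B)` is `α♯`-to-`β♯` equivariant
    (hequiv : ∀ (g : G) (I : TwoSidedIdeal A), IsClosed (I : Set A) →
      mulIdealGen ψ ((α g) '' (I : Set A)) =
        genClosedIdeal ((β g) '' (mulIdealGen ψ (I : Set A) : Set B)))
    -- `ψ̂(a)(g) = β_g(ψ(α_{g⁻¹}(a)))`
    (ψhat : A → G → 𝓜(ℂ, B))
    (hψhat : ∀ a g, ψhat a g = βM g (ψ (α g⁻¹ a))) :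
    -- (1) `ψ̂` is `α`-to-`β̄`-equivariant: `β̄_g(ψ̂(a)) = ψ̂(α_g(a))`
    (∀ (a : A) (g h : G), ψhat (α g a) h = βM g (ψhat a (g⁻¹ * h))) ∧
    -- (2) the closed ideal of `C₀(G,B)` generated by `ψ̂(I)` equals `C₀(G, closure(Bψ(I)B))`
    (∀ I : TwoSidedIdeal A, IsClosed (I : Set A) →
      ((genClosedIdeal {w : C₀(G, B) | ∃ a ∈ I, ∃ u v : C₀(G, B),
          ⇑w = fun g => u g * ((ψhat a g).fst (v g))} : TwoSidedIdeal C₀(G, B)) :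
        Set C₀(G, B)) =
      {w : C₀(G, B) | ∀ g : G, w g ∈ mulIdealGen ψ (I : Set A)}) :=
  psihat_equivariant_and_ideal_general α β hαmul hβ1 hβmul hαcont hβcont βM hβMmul hβMβ ψ hequiv
    ψhat hψhat
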